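/- Let e be a lower arc with center c and endpoints p₁, p₂. Then the Minkowski sum of e with the closed unit disc, i.e. the set {x ∈ ℝ² : there exists s ∈ e with ‖x − s‖ ≤ 1}, equals D(p₁) ∪ D(p₂) ∪ L(e), where D(p) is the closed unit disc centered at p and L(e) = D⁺(c) ∩ ℓ⁻. -/

import Mathlib

set_option maxHeartbeats 1000000

noncomputable section

/-- The plane. -/
abbrev E2 := EuclideanSpace ℝ (Fin 2)

/-- A lower circular arc of unit radius: center `c`, endpoints `p₁, p₂` on the
unit circle around `c`, both not above `c`, with `p₁` strictly left of `p₂`. -/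
structure LowerArc where
  c : E2
  p₁ : E2
  p₂ : E2
  h₁ : ‖p₁ - c‖ = 1
  h₂ : ‖p₂ - c‖ = 1
  hy₁ : p₁ 1 ≤ c 1
  hy₂ : p₂ 1 ≤ c 1
  hx : p₁ 0 < p₂ 0

/-- The set of points of a lower arc. -/
def LowerArc.pts (e : LowerArc) : Set E2 :=
  {p | ‖p - e.c‖ = 1 ∧ e.p₁ 0 ≤ p 0 ∧ p 0 ≤ e.p₂ 0 ∧ p 1 ≤ e.c 1}

/-- The tangent point of `D(p₁)` with `D⁺(c)`. -/
def LowerArc.t₁ (e : LowerArc) : E2 := (2 : ℝ) • e.p₁ - e.c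

/-- The tangent point of `D(p₂)` with `D⁺(c)`. -/
def LowerArc.t₂ (e : LowerArc) : E2 := (2 : ℝ) • e.p₂ - e.c

/-- The closed halfplane of points lying on or below the (non-vertical) line
`ℓ` through the two tangent points `2p₁ - c` and `2p₂ - c`. -/
def LowerArc.lowerHalf (e : LowerArc) : Set E2 :=
  {x | (e.t₂ 0 - e.t₁ 0) * (x 1 - e.t₁ 1) ≤ (e.t₂ 1 - e.t₁ 1) * (x 0 - e.t₁ 0)}

/-- The region `L(e) = D⁺(c) ∩ ℓ⁻`. -/
def LowerArc.L (e : LowerArc) : Set E2 := Metric.closedBall e.c 2 ∩ e.lowerHalf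

/- ## Auxiliary real-arithmetic lemmas -/

lemma crossn (a0 a1 w0 w1 : ℝ) (ha : a0^2+a1^2=1) (hw : w0^2+w1^2=1)
    (ha1 : a1 ≤ 0) (hw1 : w1 ≤ 0) (hord : a0 ≤ w0) : 0 ≤ a0*w1 - a1*w0 := by
  rcases le_total a0 0 with h1 | h1 <;> rcases le_total 0 w0 with h2 | h2
  · nlinarith [mul_nonneg (neg_nonneg.2 h1) (neg_nonneg.2 hw1),
      mul_nonpos_of_nonpos_of_nonneg ha1 h2]
  · nlinarith [sq_nonneg (a0*w1 - a1*w0), mul_nonneg (neg_nonneg.2 h1) (neg_nonneg.2 hw1)]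
  · nlinarith [sq_nonneg (a0*w1 - a1*w0), mul_nonneg (le_trans h1 hord) (neg_nonneg.2 ha1)]
  · nlinarith []

lemma lemA0 (d e A s : ℝ) (hde : d^2+e^2 = 1) (he : 0 ≤ e) (hs : s < 0)
    (hc : s*d - A*e ≤ 0) : A*d + s*e ≤ A := by
  rcases le_or_gt 0 A with hA | hA
  · nlinarith [mul_nonneg hA (by nlinarith [sq_nonneg e] : (0:ℝ) ≤ 1 - d),
      mul_nonneg (le_of_lt (neg_pos.2 hs)) he]
  · rcases le_or_gt d 0 with hd | hd
    · have hsd : 0 ≤ s*d := by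
        nlinarith [mul_nonneg (neg_nonneg.2 (le_of_lt hs)) (neg_nonneg.2 hd)]
      have hAe : A*e ≤ 0 := mul_nonpos_of_nonpos_of_nonneg (le_of_lt hA) he
      have h1 : s*d = 0 := le_antisymm (by linarith) hsd
      have hd0 : d = 0 := by
        rcases mul_eq_zero.1 h1 with h | h
        · exact absurd h (ne_of_lt hs)
        · exact h
      have he1 : e = 1 := by nlinarith
      rw [hd0, he1] at hc; nlinarith
    · nlinarith [mul_nonneg he (by linarith : 0 ≤ A*e - s*d),
        mul_nonneg (le_of_lt (neg_pos.2 hA)) (by nlinarith [sq_nonneg e] : (0:ℝ) ≤ 1 - d), hd]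

lemma claimA (a0 a1 w0 w1 u v : ℝ) (ha : a0^2+a1^2=1) (hw : w0^2+w1^2=1)
    (ha1 : a1 ≤ 0) (hw1 : w1 ≤ 0) (hord : a0 ≤ w0)
    (hs : a0*v - a1*u < 0) (ht : w0*v - w1*u ≤ 0) :
    u*w0 + v*w1 ≤ u*a0 + v*a1 := by
  have he : 0 ≤ a0*w1 - a1*w0 := crossn a0 a1 w0 w1 ha hw ha1 hw1 hord
  set d := a0*w0 + a1*w1 with hdd
  set e := a0*w1 - a1*w0 with hee
  set A := u*a0 + v*a1 with hAA
  set s := a0*v - a1*u with hss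
  have hde : d^2 + e^2 = 1 := by
    have : d^2+e^2 = (a0^2+a1^2)*(w0^2+w1^2) := by rw [hdd, hee]; ring
    rw [this, ha, hw]; norm_num
  have hid1 : u*w0 + v*w1 = A*d + s*e := by
    have : (a0^2+a1^2)*(u*w0+v*w1) = A*d + s*e := by rw [hdd, hee, hAA, hss]; ring
    rw [ha] at this; linarith
  have hid2 : w0*v - w1*u = s*d - A*e := by
    have : (a0^2+a1^2)*(w0*v-w1*u) = s*d - A*e := by rw [hdd, hee, hAA, hss]; ring
    rw [ha] at this; linarith
  rw [hid1]
  exact lemA0 d e A s hde he hs (by rw [← hid2]; exact ht)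

lemma claimD (a0 a1 b0 b1 w0 w1 u v : ℝ) (ha : a0^2+a1^2=1) (hb : b0^2+b1^2=1)
    (hw : w0^2+w1^2=1) (ha1 : a1 ≤ 0) (hb1 : b1 ≤ 0) (hw1 : w1 ≤ 0)
    (hord1 : a0 ≤ w0) (hord2 : w0 ≤ b0)
    (ht : 0 < w0*v - w1*u) (hs2 : 0 ≤ u*b1 - v*b0) :
    0 ≤ a0*v - a1*u := by
  have hk' : 0 ≤ w0*b1 - w1*b0 := crossn w0 w1 b0 b1 hw hb hw1 hb1 hord2
  have hcaw : 0 ≤ a0*w1 - a1*w0 := crossn a0 a1 w0 w1 ha hw ha1 hw1 hord1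
  have hk : 0 ≤ a0*b1 - a1*b0 := crossn a0 a1 b0 b1 ha hb ha1 hb1 (le_trans hord1 hord2)
  have hid : (w0*b1 - w1*b0)*(a0*v - a1*u)
      = (u*b1 - v*b0)*(a0*w1 - a1*w0) + (w0*v - w1*u)*(a0*b1 - a1*b0) := by ring
  rcases lt_or_eq_of_le hk' with hk'p | hk'z
  · have hnum : 0 ≤ (w0*b1 - w1*b0)*(a0*v - a1*u) := by
      rw [hid]; exact add_nonneg (mul_nonneg hs2 hcaw) (mul_nonneg (le_of_lt ht) hk)
    exact nonneg_of_mul_nonneg_right hnum hk'p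
  · have hd2 : (w0*b0+w1*b1 - 1)*(w0*b0+w1*b1 + 1) = 0 := by nlinarith [hk'z]
    rcases mul_eq_zero.1 hd2 with h | h
    · have hwb : (w0-b0)^2 + (w1-b1)^2 = 0 := by linear_combination hw + hb - 2*h
      have h0 : w0 = b0 := by nlinarith [sq_nonneg (w0-b0), sq_nonneg (w1-b1)]
      have h1 : w1 = b1 := by nlinarith [sq_nonneg (w0-b0), sq_nonneg (w1-b1)]
      rw [h0, h1] at ht; linarith
    · have hwb : (w0+b0)^2 + (w1+b1)^2 = 0 := by linear_combination hw + hb + 2*h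
      have h0 : b0 = -w0 := by nlinarith [sq_nonneg (w0+b0), sq_nonneg (w1+b1)]
      have h1 : b1 = -w1 := by nlinarith [sq_nonneg (w0+b0), sq_nonneg (w1+b1)]
      have hw1z : w1 = 0 := by
        have : -w1 ≤ 0 := by rw [← h1]; exact hb1
        linarith
      have hw0 : w0 = -1 := by
        have : w0 ≤ -w0 := by rw [← h0]; exact hord2
        nlinarith
      have ha0 : a0 = -1 := by nlinarith
      have ha1z : a1 = 0 := by nlinarith
      rw [ha0, ha1z]
      rw [hw0, hw1z] at ht
      linarith

lemma sigma1 (a0 a1 b0 b1 w0 w1 u v : ℝ) (ha : a0^2+a1^2=1) (hb : b0^2+b1^2=1)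
    (hw : w0^2+w1^2=1) (ha1 : a1 ≤ 0) (hb1 : b1 ≤ 0) (hw1 : w1 ≤ 0)
    (hord1 : a0 ≤ w0) (hord2 : w0 ≤ b0)
    (hxw : u^2+v^2 ≤ 2*(u*w0+v*w1)) (hxa : 2*(u*a0+v*a1) < u^2+v^2)
    (hxb : 2*(u*b0+v*b1) < u^2+v^2) : 0 ≤ a0*v - a1*u := by
  by_contra hσ
  push_neg at hσ
  rcases le_or_gt (w0*v - w1*u) 0 with ht | ht
  · have := claimA a0 a1 w0 w1 u v ha hw ha1 hw1 hord1 hσ ht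
    linarith
  · rcases lt_or_ge (u*b1 - v*b0) 0 with hs2 | hs2
    · have hb' : (-b0)^2 + b1^2 = 1 := by linear_combination hb
      have hw' : (-w0)^2 + w1^2 = 1 := by linear_combination hw
      have := claimA (-b0) b1 (-w0) w1 (-u) v hb' hw' hb1 hw1 (by linarith)
        (by linarith [hs2]) (by linarith [ht])
      linarith
    · have := claimD a0 a1 b0 b1 w0 w1 u v ha hb hw ha1 hb1 hw1 hord1 hord2 ht hs2
      linarith

lemma key1 (a0 a1 b0 b1 w0 w1 u v : ℝ) (ha : a0^2+a1^2=1) (hb : b0^2+b1^2=1)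
    (hw : w0^2+w1^2=1) (ha1 : a1 ≤ 0) (hb1 : b1 ≤ 0) (hw1 : w1 ≤ 0)
    (hord1 : a0 ≤ w0) (hord2 : w0 ≤ b0)
    (hxw : u^2+v^2 ≤ 2*(u*w0+v*w1)) (hxa : 2*(u*a0+v*a1) < u^2+v^2)
    (hxb : 2*(u*b0+v*b1) < u^2+v^2) :
    2*(a0*b1 - a1*b0) ≤ (b1-a1)*u + (a0-b0)*v := by
  have hσ1 : 0 ≤ a0*v - a1*u :=
    sigma1 a0 a1 b0 b1 w0 w1 u v ha hb hw ha1 hb1 hw1 hord1 hord2 hxw hxa hxb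
  have hσ2 : 0 ≤ u*b1 - v*b0 := by
    have hb' : (-b0)^2 + b1^2 = 1 := by linear_combination hb
    have ha' : (-a0)^2 + a1^2 = 1 := by linear_combination ha
    have hw' : (-w0)^2 + w1^2 = 1 := by linear_combination hw
    have := sigma1 (-b0) b1 (-a0) a1 (-w0) w1 (-u) v hb' ha' hw' hb1 ha1 hw1
      (by linarith) (by linarith)
      (by nlinarith [hxw]) (by nlinarith [hxb]) (by nlinarith [hxa])
    linarith
  have hR2 : 0 < u^2+v^2 := by nlinarith [sq_nonneg (u*a0+v*a1), sq_nonneg (a0*v-a1*u)]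
  nlinarith [mul_nonneg hσ1 (by linarith : 0 ≤ u^2+v^2 - 2*(u*b0+v*b1)),
    mul_nonneg hσ2 (by linarith : 0 ≤ u^2+v^2 - 2*(u*a0+v*a1)), hR2,
    mul_pos hR2 (by linarith : (0:ℝ) < u^2+v^2)]

lemma sigL (a0 a1 b0 b1 u v : ℝ) (ha : a0^2+a1^2=1) (hb : b0^2+b1^2=1)
    (hab : a0 < b0) (hk : 0 ≤ a0*b1 - a1*b0) (hball : u^2+v^2 ≤ 4)
    (hline : 2*(a0*b1 - a1*b0) ≤ (b1-a1)*u + (a0-b0)*v) : 0 ≤ a0*v - a1*u := by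
  have hCSa : u*a0 + v*a1 ≤ 2 := by
    nlinarith [sq_nonneg (a0*v - a1*u), sq_nonneg (u*a0+v*a1+2), sq_nonneg (u*a0+v*a1-2)]
  have hd : a0*b0 + a1*b1 < 1 := by nlinarith [sq_nonneg (a1-b1), sq_nonneg (a0-b0)]
  have idm : (b1-a1)*u + (a0-b0)*v
      = (a0*b1-a1*b0)*(u*a0+v*a1) + (1-(a0*b0+a1*b1))*(a0*v-a1*u) := by
    linear_combination (b0*v - b1*u) * ha
  by_contra hσ
  push_neg at hσ
  have h1 : (a0*b1-a1*b0)*(u*a0+v*a1) ≤ (a0*b1-a1*b0)*2 := mul_le_mul_of_nonneg_left hCSa hk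
  nlinarith [mul_pos (by linarith : (0:ℝ) < 1-(a0*b0+a1*b1))
    (by linarith : (0:ℝ) < -(a0*v-a1*u))]

lemma lbound (a0 a1 b0 b1 u v r : ℝ) (ha : a0^2+a1^2=1) (ha1 : a1 ≤ 0) (hab : a0 ≤ b0)
    (hkpos : 0 < a0*b1 - a1*b0) (hσ1 : 0 ≤ a0*v - a1*u) (hσ2 : 0 ≤ u*b1 - v*b0)
    (hkr : (a0*b1 - a1*b0)*r ≤ (a0*v - a1*u) + (u*b1 - v*b0))
    (hv : v ≤ 0) (hr2 : r^2 = u^2+v^2) (hrpos : 0 < r) : a0*r ≤ u := by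
  rcases le_or_gt 0 a0 with hs | hs
  · have hid : (a0*b1 - a1*b0)*u = a0*(u*b1 - v*b0) + b0*(a0*v - a1*u) := by ring
    have h2 : a0*((a0*b1 - a1*b0)*r) ≤ a0*((a0*v - a1*u) + (u*b1 - v*b0)) :=
      mul_le_mul_of_nonneg_left hkr hs
    have h3 : 0 ≤ (a0*v - a1*u)*(b0-a0) := mul_nonneg hσ1 (by linarith)
    have h4 : 0 ≤ (a0*b1 - a1*b0)*(u - a0*r) := by nlinarith [hid, h2, h3]
    nlinarith [mul_pos hkpos (by linarith : (0:ℝ) < 1)]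
  · rcases le_or_gt 0 u with hu | hu
    · nlinarith [mul_pos (neg_pos.2 hs) hrpos]
    · have h5 : 0 ≤ a0*v + a1*u := by
        have := mul_nonneg (neg_nonneg.2 (le_of_lt hs)) (neg_nonneg.2 hv)
        have := mul_nonneg (neg_nonneg.2 ha1) (neg_nonneg.2 (le_of_lt hu))
        nlinarith
      have h6eq : a0^2*r^2 - u^2 = (a0*v-a1*u)*(a0*v+a1*u) := by
        linear_combination a0^2*hr2 + u^2*ha
      have h6 : 0 ≤ a0^2*r^2 - u^2 := by rw [h6eq]; exact mul_nonneg hσ1 h5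
      have har : a0*r < 0 := mul_neg_of_neg_of_pos hs hrpos
      nlinarith [h6, har, hu]

lemma key2 (a0 a1 b0 b1 u v : ℝ) (ha : a0^2+a1^2=1) (hb : b0^2+b1^2=1)
    (ha1 : a1 ≤ 0) (hb1 : b1 ≤ 0) (hab : a0 < b0)
    (hball : u^2+v^2 ≤ 4)
    (hline : 2*(a0*b1 - a1*b0) ≤ (b1-a1)*u + (a0-b0)*v) :
    ∃ w0 w1 : ℝ, w0^2+w1^2 = 1 ∧ a0 ≤ w0 ∧ w0 ≤ b0 ∧ w1 ≤ 0 ∧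
      (u-w0)^2+(v-w1)^2 ≤ 1 := by
  have hk : 0 ≤ a0*b1 - a1*b0 := crossn a0 a1 b0 b1 ha hb ha1 hb1 (le_of_lt hab)
  rcases le_or_gt (u^2+v^2) 0 with hR | hR
  · have hu : u = 0 := by nlinarith [sq_nonneg u, sq_nonneg v]
    have hv : v = 0 := by nlinarith [sq_nonneg u, sq_nonneg v]
    exact ⟨a0, a1, ha, le_refl _, le_of_lt hab, ha1, by rw [hu, hv]; nlinarith⟩
  · set r := Real.sqrt (u^2+v^2) with hrdef
    have hrpos : 0 < r := Real.sqrt_pos.2 hR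
    have hr2 : r^2 = u^2+v^2 := Real.sq_sqrt (le_of_lt hR)
    have hrle : r ≤ 2 := by nlinarith [hr2, hrpos]
    have hσ1 : 0 ≤ a0*v - a1*u := sigL a0 a1 b0 b1 u v ha hb hab hk hball hline
    have hb' : (-b0)^2 + b1^2 = 1 := by linear_combination hb
    have ha' : (-a0)^2 + a1^2 = 1 := by linear_combination ha
    have hσ2 : 0 ≤ u*b1 - v*b0 := by
      have := sigL (-b0) b1 (-a0) a1 (-u) v hb' ha' (by linarith)
        (by linarith) (by linarith) (by linarith)
      linarith
    obtain ⟨hv, hua, hub⟩ : v ≤ 0 ∧ a0*r ≤ u ∧ u ≤ b0*r := by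
      rcases lt_or_eq_of_le hk with hkpos | hkz
      · have hCSa : u*a0+v*a1 ≤ r := by
          nlinarith [sq_nonneg (a0*v - a1*u), hr2, hrpos, sq_nonneg (u*a0+v*a1-r)]
        have hCSb : u*b0+v*b1 ≤ r := by
          nlinarith [sq_nonneg (b0*v - b1*u), hr2, hrpos, sq_nonneg (u*b0+v*b1-r)]
        have hv : v ≤ 0 := by
          by_contra hvp
          push_neg at hvp
          have hidv : (a0*b1-a1*b0)*v = a1*(u*b1-v*b0) + b1*(a0*v-a1*u) := by ring
          nlinarith [mul_pos hkpos hvp, mul_nonneg (neg_nonneg.2 ha1) hσ2,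
            mul_nonneg (neg_nonneg.2 hb1) hσ1]
        have hidk : (a0*b1-a1*b0)*(u^2+v^2)
            = (a0*v-a1*u)*(u*b0+v*b1) + (u*b1-v*b0)*(u*a0+v*a1) := by ring
        have h1 : (a0*v-a1*u)*(u*b0+v*b1) ≤ (a0*v-a1*u)*r :=
          mul_le_mul_of_nonneg_left hCSb hσ1
        have h2 : (u*b1-v*b0)*(u*a0+v*a1) ≤ (u*b1-v*b0)*r :=
          mul_le_mul_of_nonneg_left hCSa hσ2
        have h3 : (a0*b1-a1*b0)*r^2 ≤ ((a0*v-a1*u)+(u*b1-v*b0))*r := by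
          rw [hr2]; nlinarith [hidk, h1, h2]
        have hkr : (a0*b1 - a1*b0)*r ≤ (a0*v - a1*u) + (u*b1 - v*b0) := by
          nlinarith [h3, hrpos]
        refine ⟨hv, lbound a0 a1 b0 b1 u v r ha ha1 (le_of_lt hab) hkpos hσ1 hσ2 hkr
          hv hr2 hrpos, ?_⟩
        have := lbound (-b0) b1 (-a0) a1 (-u) v r hb' hb1 (by linarith)
          (by linarith) (by linarith) (by linarith) (by linarith) hv
          (by linear_combination hr2) hrpos
        linarith
      · have hd2 : (a0*b0+a1*b1 - 1)*(a0*b0+a1*b1 + 1) = 0 := by nlinarith [hkz]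
        rcases mul_eq_zero.1 hd2 with h | h
        · exfalso
          have : (a0-b0)^2 + (a1-b1)^2 = 0 := by linear_combination ha + hb - 2*h
          nlinarith [sq_nonneg (a0-b0), sq_nonneg (a1-b1)]
        · have hab0 : (a0+b0)^2 + (a1+b1)^2 = 0 := by linear_combination ha + hb + 2*h
          have h0 : b0 = -a0 := by nlinarith [sq_nonneg (a0+b0), sq_nonneg (a1+b1)]
          have h1 : b1 = -a1 := by nlinarith [sq_nonneg (a0+b0), sq_nonneg (a1+b1)]
          have ha1z : a1 = 0 := by
            have : -a1 ≤ 0 := by rw [← h1]; exact hb1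
            linarith
          have ha0 : a0 = -1 := by nlinarith
          have hu2 : u^2 ≤ r^2 := by nlinarith [sq_nonneg v]
          refine ⟨?_, ?_, ?_⟩
          · have h2 : 0 ≤ a0*v - a1*u := hσ1
            rw [ha0, ha1z] at h2; linarith
          · rw [ha0]; nlinarith [hrpos]
          · rw [h0, ha0]; nlinarith [hrpos]
    refine ⟨u/r, v/r, ?_, ?_, ?_, ?_, ?_⟩
    · field_simp
      linear_combination hr2.symm
    · exact (le_div_iff₀ hrpos).2 hua
    · exact (div_le_iff₀ hrpos).2 hub
    · exact div_nonpos_of_nonpos_of_nonneg hv (le_of_lt hrpos)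
    · have hrne : r ≠ 0 := ne_of_gt hrpos
      have hexp : (u - u/r)^2 + (v - v/r)^2 = (u^2+v^2)*((r-1)/r)^2 := by
        field_simp
      rw [hexp, ← hr2]
      have hcan : r^2*((r-1)/r)^2 = (r-1)^2 := by field_simp
      rw [hcan]
      nlinarith [hrpos, hrle]

/- ## Norm/coordinate helpers -/

lemma e2_norm_sq (y : E2) : ‖y‖^2 = (y 0)^2 + (y 1)^2 := by
  rw [EuclideanSpace.norm_eq]
  rw [Real.sq_sqrt (by positivity)]
  simp [Fin.sum_univ_two, sq_abs]

lemma e2_norm_eq_one (y : E2) : ‖y‖ = 1 ↔ (y 0)^2 + (y 1)^2 = 1 := by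
  rw [← e2_norm_sq]
  constructor
  · intro h; rw [h]; norm_num
  · intro h
    have h0 : 0 ≤ ‖y‖ := norm_nonneg y
    nlinarith

lemma e2_norm_le (y : E2) (t : ℝ) (ht : 0 ≤ t) : ‖y‖ ≤ t ↔ (y 0)^2 + (y 1)^2 ≤ t^2 := by
  rw [← e2_norm_sq]
  constructor
  · intro h; nlinarith [norm_nonneg y]
  · intro h; nlinarith [norm_nonneg y]

/-- The Minkowski sum of a lower arc with the closed unit disc equals
`D(p₁) ∪ D(p₂) ∪ L(e)`. -/
theorem stmt_14 (e : LowerArc) :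
    {x : E2 | ∃ s ∈ e.pts, ‖x - s‖ ≤ 1} =
      Metric.closedBall e.p₁ 1 ∪ Metric.closedBall e.p₂ 1 ∪ e.L := by
  obtain ⟨c, p₁, p₂, h₁, h₂, hy₁, hy₂, hx⟩ := e
  have ha : (p₁ 0 - c 0)^2 + (p₁ 1 - c 1)^2 = 1 := by
    have := (e2_norm_eq_one (p₁ - c)).1 h₁
    simpa using this
  have hb : (p₂ 0 - c 0)^2 + (p₂ 1 - c 1)^2 = 1 := by
    have := (e2_norm_eq_one (p₂ - c)).1 h₂
    simpa using this
  ext x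
  simp only [Set.mem_setOf_eq, Set.mem_union, LowerArc.pts, LowerArc.L, LowerArc.lowerHalf,
    LowerArc.t₁, LowerArc.t₂, Set.mem_inter_iff, Metric.mem_closedBall]
  constructor
  · rintro ⟨s, ⟨hsn, hs1, hs2, hs3⟩, hxs⟩
    by_cases hd1 : dist x p₁ ≤ 1
    · exact Or.inl (Or.inl hd1)
    by_cases hd2 : dist x p₂ ≤ 1
    · exact Or.inl (Or.inr hd2)
    right
    push_neg at hd1 hd2
    have hw : (s 0 - c 0)^2 + (s 1 - c 1)^2 = 1 := by
      have := (e2_norm_eq_one (s - c)).1 hsn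
      simpa using this
    have hxs' : (x 0 - s 0)^2 + (x 1 - s 1)^2 ≤ 1 := by
      have := (e2_norm_le (x - s) 1 zero_le_one).1 hxs
      simpa using this
    have hxa' : 1 < (x 0 - p₁ 0)^2 + (x 1 - p₁ 1)^2 := by
      rw [dist_eq_norm] at hd1
      by_contra hcon
      push_neg at hcon
      exact absurd ((e2_norm_le (x - p₁) 1 zero_le_one).2 (by simpa using hcon))
        (not_le.2 hd1)
    have hxb' : 1 < (x 0 - p₂ 0)^2 + (x 1 - p₂ 1)^2 := by
      rw [dist_eq_norm] at hd2
      by_contra hcon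
      push_neg at hcon
      exact absurd ((e2_norm_le (x - p₂) 1 zero_le_one).2 (by simpa using hcon))
        (not_le.2 hd2)
    constructor
    · -- x ∈ closedBall c 2
      have hdc : dist x c ≤ dist x s + dist s c := dist_triangle x s c
      have h1 : dist x s ≤ 1 := by rwa [dist_eq_norm]
      have h2 : dist s c = 1 := by rwa [dist_eq_norm]
      linarith
    · -- lower half
      have hkey := key1 (p₁ 0 - c 0) (p₁ 1 - c 1) (p₂ 0 - c 0) (p₂ 1 - c 1)
        (s 0 - c 0) (s 1 - c 1) (x 0 - c 0) (x 1 - c 1)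
        ha hb hw (by linarith) (by linarith) (by linarith)
        (by linarith) (by linarith)
        (by nlinarith [hxs', hw]) (by nlinarith [hxa', ha]) (by nlinarith [hxb', hb])
      simp only [PiLp.sub_apply, PiLp.smul_apply, smul_eq_mul]
      nlinarith [hkey]
  · rintro ((h | h) | ⟨hball, hline⟩)
    · exact ⟨p₁, ⟨h₁, le_refl _, le_of_lt hx, hy₁⟩, by rwa [dist_eq_norm] at h⟩
    · exact ⟨p₂, ⟨h₂, le_of_lt hx, le_refl _, hy₂⟩, by rwa [dist_eq_norm] at h⟩
    · have hball' : (x 0 - c 0)^2 + (x 1 - c 1)^2 ≤ 4 := by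
        rw [dist_eq_norm] at hball
        have h4 := (e2_norm_le (x - c) 2 (by norm_num)).1 hball
        simp only [PiLp.sub_apply] at h4
        nlinarith [h4]
      have hline' : 2*((p₁ 0 - c 0)*(p₂ 1 - c 1) - (p₁ 1 - c 1)*(p₂ 0 - c 0)) ≤
          ((p₂ 1 - c 1)-(p₁ 1 - c 1))*(x 0 - c 0) + ((p₁ 0 - c 0)-(p₂ 0 - c 0))*(x 1 - c 1) := by
        simp only [PiLp.sub_apply, PiLp.smul_apply, smul_eq_mul] at hline
        nlinarith [hline]
      obtain ⟨w0, w1, hwn, hw1, hw2, hw3, hwd⟩ := key2 (p₁ 0 - c 0) (p₁ 1 - c 1)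
        (p₂ 0 - c 0) (p₂ 1 - c 1) (x 0 - c 0) (x 1 - c 1)
        ha hb (by linarith) (by linarith) (by linarith) hball' hline'
      refine ⟨!₂[c 0 + w0, c 1 + w1], ⟨?_, ?_, ?_, ?_⟩, ?_⟩
      · rw [e2_norm_eq_one]
        simp only [PiLp.sub_apply, PiLp.toLp_apply, Matrix.cons_val_zero, Matrix.cons_val_one, Matrix.head_cons]
        linear_combination hwn
      · simp only [PiLp.toLp_apply, Matrix.cons_val_zero]; linarith
      · simp only [PiLp.toLp_apply, Matrix.cons_val_zero]; linarith
      · simp only [PiLp.toLp_apply, Matrix.cons_val_one, Matrix.head_cons, Matrix.cons_val_zero]; linarith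
      · rw [e2_norm_le _ 1 zero_le_one]
        simp only [PiLp.sub_apply, PiLp.toLp_apply, Matrix.cons_val_zero, Matrix.cons_val_one, Matrix.head_cons]
        nlinarith [hwd]
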